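/- arXiv:math/0304195 — 2 statements merged into one kernel-verified Lean document; each statement's English description precedes it below -/
import Mathlib

section
/- Let f(x) = x^k with k ≥ 1 even. For n ≥ 1, the set χ_n^- of truncated arcs γ(t) = a_1 t + ... + a_n t^n in R such that f∘γ(t) = -t^n + (higher order terms) is empty, and χ_n^+ (defined with +t^n) is nonempty exactly when k divides n; when n = mk, χ_n^+ is in bijection with {±1} × R^{n-m}. -/
open Polynomial

/-- Truncated arcs of length `n` in `ℝ`: polynomials `γ(t) = a₁ t + ⋯ + aₙ tⁿ`. -/
def ArcSpace (n : ℕ) : Set (Polynomial ℝ) :=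
  {γ | γ.coeff 0 = 0 ∧ γ.natDegree ≤ n}

/-- `χ_n^ε` for `f(x) = x^k`: truncated arcs with `f ∘ γ (t) = ε tⁿ + (higher order terms)`. -/
def chiSign (k n : ℕ) (ε : ℝ) : Set (Polynomial ℝ) :=
  {γ | γ ∈ ArcSpace n ∧ (∀ i < n, (γ ^ k).coeff i = 0) ∧ (γ ^ k).coeff n = ε}

private lemma tc_pow (p : ℝ[X]) (k : ℕ) : (p ^ k).trailingCoeff = p.trailingCoeff ^ k := by
  induction k with
  | zero => simp [trailingCoeff]
  | succ k ih => rw [pow_succ, pow_succ, trailingCoeff_mul, ih]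

private lemma ntd_pow (p : ℝ[X]) (hp : p ≠ 0) (k : ℕ) :
    (p ^ k).natTrailingDegree = k * p.natTrailingDegree := by
  induction k with
  | zero => simp
  | succ k ih =>
    rw [pow_succ, natTrailingDegree_mul (pow_ne_zero _ hp) hp, ih]; ring

private lemma chi_ntd {k n : ℕ} (hk : 1 ≤ k) {ε : ℝ} (hε : ε ≠ 0) {γ : ℝ[X]}
    (hγ : γ ∈ chiSign k n ε) :
    γ ≠ 0 ∧ k * γ.natTrailingDegree = n ∧ γ.trailingCoeff ^ k = ε := by
  obtain ⟨⟨h0, hdeg⟩, hlow, htop⟩ := hγ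
  have hγ0 : γ ≠ 0 := by
    rintro rfl
    rw [zero_pow (by omega : k ≠ 0)] at htop
    simp at htop
    exact hε htop.symm
  have hpow : γ ^ k ≠ 0 := pow_ne_zero _ hγ0
  have h1 : n ≤ (γ ^ k).natTrailingDegree := le_natTrailingDegree hpow hlow
  have h2 : (γ ^ k).natTrailingDegree ≤ n :=
    natTrailingDegree_le_of_ne_zero (by rw [htop]; exact hε)
  have h3 : (γ ^ k).natTrailingDegree = n := le_antisymm h2 h1
  refine ⟨hγ0, by rw [← ntd_pow γ hγ0 k, h3], ?_⟩
  rw [← tc_pow, trailingCoeff, h3, htop]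

private lemma mem_chi_iff {k m : ℕ} (hk : 1 ≤ k) (hm : 1 ≤ m) (γ : ℝ[X]) :
    γ ∈ chiSign k (m * k) 1 ↔
      (∀ i < m, γ.coeff i = 0) ∧ (γ.coeff m) ^ k = 1 ∧ γ.natDegree ≤ m * k := by
  constructor
  · intro hγ
    obtain ⟨hγ0, hd, hc⟩ := chi_ntd hk one_ne_zero hγ
    have hdm : γ.natTrailingDegree = m := by
      have : k * γ.natTrailingDegree = k * m := by rw [hd]; ring
      exact Nat.eq_of_mul_eq_mul_left (by omega) this
    refine ⟨fun i hi => coeff_eq_zero_of_lt_natTrailingDegree (by omega), ?_, hγ.1.2⟩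
    rw [← hdm, ← trailingCoeff, hc]
  · rintro ⟨hlow, hc, hdeg⟩
    have hc0 : γ.coeff m ≠ 0 := by
      intro h; rw [h, zero_pow (by omega : k ≠ 0)] at hc; norm_num at hc
    have hγ0 : γ ≠ 0 := fun h => hc0 (by simp [h])
    have hd : γ.natTrailingDegree = m :=
      le_antisymm (natTrailingDegree_le_of_ne_zero hc0) (le_natTrailingDegree hγ0 hlow)
    have hntd : (γ ^ k).natTrailingDegree = m * k := by rw [ntd_pow γ hγ0 k, hd]; ring
    refine ⟨⟨hlow 0 hm, hdeg⟩,
      fun i hi => coeff_eq_zero_of_lt_natTrailingDegree (by omega), ?_⟩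
    have h4 : (γ ^ k).coeff (m * k) = (γ ^ k).trailingCoeff := by rw [trailingCoeff, hntd]
    rw [h4, tc_pow, trailingCoeff, hd, hc]

private def Bfun (m n : ℕ) (s : ℝ) (a : Fin (n - m) → ℝ) (i : ℕ) : ℝ :=
  if i = m then s
  else if h : m + 1 ≤ i ∧ i - (m + 1) < n - m then a ⟨i - (m + 1), h.2⟩ else 0

private noncomputable def Gpoly (m n : ℕ) (s : ℝ) (a : Fin (n - m) → ℝ) : ℝ[X] :=
  ∑ i ∈ Finset.range (n + 1), monomial i (Bfun m n s a i)

private lemma coeff_Gpoly (m n : ℕ) (s : ℝ) (a : Fin (n - m) → ℝ) (j : ℕ) :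
    (Gpoly m n s a).coeff j = if j < n + 1 then Bfun m n s a j else 0 := by
  rw [Gpoly, finset_sum_coeff]
  simp only [coeff_monomial]
  rw [Finset.sum_ite_eq' (Finset.range (n + 1)) j]
  simp [Finset.mem_range]

private lemma chi_equiv (k m : ℕ) (hk : 2 ≤ k) (hke : Even k) (hm : 1 ≤ m) :
    Nonempty (↥(chiSign k (m * k) 1) ≃
      (↥({1, -1} : Set ℝ) × (Fin (m * k - m) → ℝ))) := by
  set n := m * k with hn
  have hmn : m + 1 ≤ n := by
    have : m * 2 ≤ m * k := Nat.mul_le_mul_left m hk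
    omega
  have key : ∀ γ : ℝ[X], γ ∈ chiSign k n 1 ↔
      (∀ i < m, γ.coeff i = 0) ∧ (γ.coeff m) ^ k = 1 ∧ γ.natDegree ≤ n :=
    fun γ => mem_chi_iff (by omega) hm γ
  have hFmem : ∀ γ : ℝ[X], γ ∈ chiSign k n 1 → γ.coeff m ∈ ({1, -1} : Set ℝ) := by
    intro γ hγ
    have hc := ((key γ).1 hγ).2.1
    rcases pow_eq_one_iff_cases.1 hc with h | h | h
    · omega
    · exact Or.inl h
    · exact Or.inr h.1
  have hGmem : ∀ (s : ↥({1, -1} : Set ℝ)) (a : Fin (n - m) → ℝ),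
      Gpoly m n (s : ℝ) a ∈ chiSign k n 1 := by
    intro s a
    refine (key _).2 ⟨?_, ?_, ?_⟩
    · intro i hi
      rw [coeff_Gpoly, if_pos (by omega), Bfun, if_neg (by omega), dif_neg (by omega)]
    · rw [coeff_Gpoly, if_pos (by omega), Bfun, if_pos rfl]
      rcases s.2 with h | h
      · rw [h, one_pow]
      · rw [Set.mem_singleton_iff.1 h, hke.neg_one_pow]
    · rw [natDegree_le_iff_coeff_eq_zero]
      intro N hN
      rw [coeff_Gpoly, if_neg (by omega)]
  refine ⟨⟨fun γ => (⟨γ.1.coeff m, hFmem _ γ.2⟩, fun j => γ.1.coeff (m + 1 + j)),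
    fun p => ⟨Gpoly m n (p.1 : ℝ) p.2, hGmem p.1 p.2⟩, ?_, ?_⟩⟩
  · rintro ⟨γ, hγ⟩
    obtain ⟨hlow, hc, hdeg⟩ := (key γ).1 hγ
    apply Subtype.ext
    apply Polynomial.ext
    intro j
    show (Gpoly m n _ _).coeff j = γ.coeff j
    rw [coeff_Gpoly]
    by_cases hj : j < n + 1
    · rw [if_pos hj, Bfun]
      by_cases hjm : j = m
      · rw [if_pos hjm, hjm]
      · rw [if_neg hjm]
        by_cases hjm2 : m + 1 ≤ j
        · rw [dif_pos ⟨hjm2, by omega⟩]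
          show γ.coeff (m + 1 + (j - (m + 1))) = γ.coeff j
          congr 1
          omega
        · rw [dif_neg (by omega)]
          exact (hlow j (by omega)).symm
    · rw [if_neg hj]
      exact (coeff_eq_zero_of_natDegree_lt (by omega)).symm
  · rintro ⟨s, a⟩
    refine Prod.ext ?_ ?_
    · apply Subtype.ext
      show (Gpoly m n _ _).coeff m = (s : ℝ)
      rw [coeff_Gpoly, if_pos (by omega), Bfun, if_pos rfl]
    · funext j
      show (Gpoly m n _ _).coeff (m + 1 + j) = a j
      have hj : (j : ℕ) < n - m := j.isLt
      rw [coeff_Gpoly, if_pos (by omega), Bfun, if_neg (by omega),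
        dif_pos ⟨by omega, by omega⟩]
      exact congrArg a (by
        apply Fin.ext
        show m + 1 + (j : ℕ) - (m + 1) = (j : ℕ)
        omega)

/-- For `f(x) = x^k`, `k ≥ 1` even, and `n ≥ 1`: `χ_n⁻ = ∅`, `χ_n⁺` is nonempty exactly
when `k ∣ n`, and for `n = m k` the set `χ_n⁺` is in bijection with `{±1} × ℝ^{n-m}`. -/
theorem stmt1 (k n : ℕ) (hk : 1 ≤ k) (hke : Even k) (hn : 1 ≤ n) :
    chiSign k n (-1) = ∅ ∧
    ((chiSign k n 1).Nonempty ↔ k ∣ n) ∧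
    ∀ m : ℕ, n = m * k →
      Nonempty (↥(chiSign k n 1) ≃ (↥({1, -1} : Set ℝ) × (Fin (n - m) → ℝ))) := by
  have hk2 : 2 ≤ k := by rcases hke with ⟨r, rfl⟩; omega
  refine ⟨?_, ⟨?_, ?_⟩, ?_⟩
  · ext γ
    simp only [Set.mem_empty_iff_false, iff_false]
    intro hγ
    obtain ⟨hγ0, hd, hc⟩ := chi_ntd hk (by norm_num) hγ
    have : (0 : ℝ) ≤ γ.trailingCoeff ^ k := hke.pow_nonneg _
    rw [hc] at this
    linarith
  · rintro ⟨γ, hγ⟩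
    obtain ⟨hγ0, hd, hc⟩ := chi_ntd hk one_ne_zero hγ
    exact ⟨γ.natTrailingDegree, hd.symm⟩
  · rintro ⟨d, rfl⟩
    have hd1 : 1 ≤ d := by
      rcases Nat.eq_zero_or_pos d with h | h
      · subst h; simp at hn
      · exact h
    refine ⟨(X : ℝ[X]) ^ d, ⟨?_, ?_⟩, ?_, ?_⟩
    · rw [coeff_X_pow]; simp; omega
    · rw [natDegree_X_pow]
      calc d = 1 * d := (one_mul d).symm
        _ ≤ k * d := Nat.mul_le_mul_right d hk
    · intro i hi
      rw [← pow_mul, mul_comm d k, coeff_X_pow, if_neg (by omega)]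
    · rw [← pow_mul, mul_comm d k, coeff_X_pow, if_pos rfl]
  · intro m hnm
    subst hnm
    have hm : 1 ≤ m := by
      rcases Nat.eq_zero_or_pos m with h | h
      · subst h; simp at hn
      · exact h
    exact chi_equiv k m hk2 hke hm
end

section
/- Let π: Ã → A be a continuous surjection of topological spaces, B ⊆ A closed, B̃ = π^{-1}(B), such that π restricts to a homeomorphism Ã \ B̃ → A \ B. Suppose for each i the induced map π_*: H_i(Ã; Z/2) → H_i(A; Z/2) is surjective and π_*: H_{i-1}(Ã, B̃; Z/2) → H_{i-1}(A, B; Z/2) is an isomorphism. Then there is a short exact sequence 0 → H_i(B̃; Z/2) → H_i(B; Z/2) ⊕ H_i(Ã; Z/2) → H_i(A; Z/2) → 0; in particular dim H_i(Ã; Z/2) − dim H_i(B̃; Z/2) = dim H_i(A; Z/2) − dim H_i(B; Z/2) when all these dimensions are finite. -/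
open Function Module

/-- Algebraic formulation (over `ℤ/2`) of the statement. For a continuous surjection
`π : Ã → A` with `B̃ = π⁻¹(B)` and `π` a homeomorphism off `B`, the long exact
sequences of the pairs `(Ã, B̃)` and `(A, B)` in singular homology with `ℤ/2`
coefficients give the following data: graded modules `HBt i = H_i(B̃; ℤ/2)`,
`HAt i = H_i(Ã; ℤ/2)`, `Pt i = H_i(Ã, B̃; ℤ/2)` and `HB, HA, P` for the pair `(A, B)`,
two exact sequences `⋯ → HBt i → HAt i → Pt i → HBt (i-1) → ⋯` (and likewise below),
and vertical maps `π_*` making all squares commute.  Assume `π_* : H_i(Ã) → H_i(A)` is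
surjective for all `i` and `π_* : H_{i-1}(Ã, B̃) → H_{i-1}(A, B)` is an isomorphism for
all `i`.  Then for each `i` the sequence
`0 → H_i(B̃) → H_i(B) ⊕ H_i(Ã) → H_i(A) → 0`
(with maps `x ↦ (π_* x, incl_* x)` and `(y, z) ↦ incl_* y − π_* z`) is exact; and if
all four modules are finite dimensional then
`dim H_i(Ã) − dim H_i(B̃) = dim H_i(A) − dim H_i(B)` (stated additively). -/
theorem stmt5
    (HBt HAt Pt HB HA P : ℤ → Type)
    [∀ i, AddCommGroup (HBt i)] [∀ i, Module (ZMod 2) (HBt i)]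
    [∀ i, AddCommGroup (HAt i)] [∀ i, Module (ZMod 2) (HAt i)]
    [∀ i, AddCommGroup (Pt i)] [∀ i, Module (ZMod 2) (Pt i)]
    [∀ i, AddCommGroup (HB i)] [∀ i, Module (ZMod 2) (HB i)]
    [∀ i, AddCommGroup (HA i)] [∀ i, Module (ZMod 2) (HA i)]
    [∀ i, AddCommGroup (P i)] [∀ i, Module (ZMod 2) (P i)]
    -- the two long exact sequences
    (at' : ∀ i, HBt i →ₗ[ZMod 2] HAt i) (bt : ∀ i, HAt i →ₗ[ZMod 2] Pt i)
    (ct : ∀ i, Pt i →ₗ[ZMod 2] HBt (i - 1))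
    (a' : ∀ i, HB i →ₗ[ZMod 2] HA i) (b' : ∀ i, HA i →ₗ[ZMod 2] P i)
    (c' : ∀ i, P i →ₗ[ZMod 2] HB (i - 1))
    (hexab : ∀ i, Exact (at' i) (bt i)) (hexbc : ∀ i, Exact (bt i) (ct i))
    (hexca : ∀ i, Exact (ct i) (at' (i - 1)))
    (hexab' : ∀ i, Exact (a' i) (b' i)) (hexbc' : ∀ i, Exact (b' i) (c' i))
    (hexca' : ∀ i, Exact (c' i) (a' (i - 1)))
    -- the vertical maps induced by π, and the commuting ladder
    (πB : ∀ i, HBt i →ₗ[ZMod 2] HB i) (πA : ∀ i, HAt i →ₗ[ZMod 2] HA i)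
    (πP : ∀ i, Pt i →ₗ[ZMod 2] P i)
    (hsq1 : ∀ i, (a' i).comp (πB i) = (πA i).comp (at' i))
    (hsq2 : ∀ i, (b' i).comp (πA i) = (πP i).comp (bt i))
    (hsq3 : ∀ i, (c' i).comp (πP i) = (πB (i - 1)).comp (ct i))
    -- π_* surjective on absolute homology, bijective on relative homology
    (hsurj : ∀ i, Surjective (πA i)) (hiso : ∀ i, Bijective (πP i)) :
    ∀ i : ℤ,
      Injective ((πB i).prod (at' i)) ∧
      Exact ((πB i).prod (at' i))
        ((a' i).comp (LinearMap.fst (ZMod 2) (HB i) (HAt i)) -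
          (πA i).comp (LinearMap.snd (ZMod 2) (HB i) (HAt i))) ∧
      Surjective ((a' i).comp (LinearMap.fst (ZMod 2) (HB i) (HAt i)) -
          (πA i).comp (LinearMap.snd (ZMod 2) (HB i) (HAt i))) ∧
      (FiniteDimensional (ZMod 2) (HBt i) → FiniteDimensional (ZMod 2) (HAt i) →
        FiniteDimensional (ZMod 2) (HB i) → FiniteDimensional (ZMod 2) (HA i) →
        finrank (ZMod 2) (HAt i) + finrank (ZMod 2) (HB i) =
          finrank (ZMod 2) (HA i) + finrank (ZMod 2) (HBt i)) := by

  -- injectivity, proved for all indices first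
  have key : ∀ i : ℤ, Injective ((πB i).prod (at' i)) := by
    intro i
    obtain ⟨j, rfl⟩ : ∃ j : ℤ, i = j - 1 := ⟨i + 1, by ring⟩
    set i := j - 1 with hi
    rw [injective_iff_map_eq_zero]
    intro x hx
    have h1 : πB i x = 0 := congrArg Prod.fst hx
    have h2 : at' i x = 0 := congrArg Prod.snd hx
    obtain ⟨y, hy⟩ := (hexca j x).mp h2
    have hc : c' j (πP j y) = 0 := by
      have := congrFun (congrArg DFunLike.coe (hsq3 j)) y
      simp only [LinearMap.comp_apply] at this
      rw [this, hy, h1]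
    obtain ⟨z, hz⟩ := (hexbc' j _).mp hc
    obtain ⟨w, hw⟩ := hsurj j z
    have : πP j (bt j w) = πP j y := by
      have h2' := congrFun (congrArg DFunLike.coe (hsq2 j)) w
      simp only [LinearMap.comp_apply] at h2'
      rw [← h2', hw, hz]
    have hyw : bt j w = y := (hiso j).injective this
    rw [← hy, ← hyw]
    exact (hexbc j).apply_apply_eq_zero w
  intro i
  obtain ⟨j, rfl⟩ : ∃ j : ℤ, i = j - 1 := ⟨i + 1, by ring⟩
  set i := j - 1 with hi
  set f := (πB i).prod (at' i) with hf
  set g := ((a' i).comp (LinearMap.fst (ZMod 2) (HB i) (HAt i)) -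
      (πA i).comp (LinearMap.snd (ZMod 2) (HB i) (HAt i))) with hg
  have hgapp : ∀ y z, g (y, z) = a' i y - πA i z := fun y z => rfl
  have hexact : Exact f g := by
    intro p
    obtain ⟨y, z⟩ := p
    constructor
    · intro hp
      have hyz : a' i y = πA i z := by
        have := hgapp y z
        rw [hp] at this
        exact (sub_eq_zero.mp this.symm)
      have hbz : πP i (bt i z) = 0 := by
        have h2' := congrFun (congrArg DFunLike.coe (hsq2 i)) z
        simp only [LinearMap.comp_apply] at h2'
        rw [← h2', ← hyz]
        exact (hexab' i).apply_apply_eq_zero y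
      have hbz0 : bt i z = 0 := by
        have := (hiso i).injective (a₂ := 0) (by rw [hbz, map_zero])
        exact this
      obtain ⟨x, hx⟩ := (hexab i z).mp hbz0
      -- y - πB x is in ker a'
      have hker : a' i (y - πB i x) = 0 := by
        have h1' := congrFun (congrArg DFunLike.coe (hsq1 i)) x
        simp only [LinearMap.comp_apply] at h1'
        rw [map_sub, h1', hx, hyz, sub_self]
      obtain ⟨w', hw'⟩ := (hexca' j _).mp hker
      obtain ⟨w, hw⟩ := (hiso j).surjective w'
      have hw2 : πB i (ct j w) = y - πB i x := by
        have h3' := congrFun (congrArg DFunLike.coe (hsq3 j)) w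
        simp only [LinearMap.comp_apply] at h3'
        rw [← h3', hw, hw']
      refine ⟨x + ct j w, ?_⟩
      have hat : at' i (ct j w) = 0 := (hexca j).apply_apply_eq_zero w
      show (πB i (x + ct j w), at' i (x + ct j w)) = (y, z)
      rw [map_add, map_add, hw2, hat, hx, add_zero]
      rw [Prod.mk.injEq]
      exact ⟨by abel, rfl⟩
    · rintro ⟨x, hx⟩
      have h1' := congrFun (congrArg DFunLike.coe (hsq1 i)) x
      simp only [LinearMap.comp_apply] at h1'
      have : f x = (πB i x, at' i x) := rfl
      rw [this] at hx
      have hy : y = πB i x := (congrArg Prod.fst hx).symm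
      have hz : z = at' i x := (congrArg Prod.snd hx).symm
      rw [hgapp, hy, hz, h1', sub_self]
  have hgsurj : Surjective g := by
    intro u
    obtain ⟨v, hv⟩ := (hiso i).surjective (b' i u)
    have hct : ct i v = 0 := by
      have hinj := (injective_iff_map_eq_zero _).mp (key (i - 1))
      apply hinj
      have hB0 : πB (i - 1) (ct i v) = 0 := by
        have h3' := congrFun (congrArg DFunLike.coe (hsq3 i)) v
        simp only [LinearMap.comp_apply] at h3'
        rw [← h3', hv]
        exact (hexbc' i).apply_apply_eq_zero u
      have hA0 : at' (i - 1) (ct i v) = 0 := (hexca i).apply_apply_eq_zero v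
      show (πB (i-1) (ct i v), at' (i-1) (ct i v)) = 0
      rw [hB0, hA0]; rfl
    obtain ⟨w, hw⟩ := (hexbc i v).mp hct
    have hbu : b' i (u - πA i w) = 0 := by
      have h2' := congrFun (congrArg DFunLike.coe (hsq2 i)) w
      simp only [LinearMap.comp_apply] at h2'
      rw [map_sub, h2', hw, hv, sub_self]
    obtain ⟨y, hy⟩ := (hexab' i _).mp hbu
    refine ⟨(y, -w), ?_⟩
    rw [hgapp, hy, map_neg, sub_neg_eq_add, sub_add_cancel]
  refine ⟨key i, hexact, hgsurj, ?_⟩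
  intro _ _ _ _
  have h1 := g.finrank_range_add_finrank_ker
  rw [LinearMap.range_eq_top.mpr hgsurj, finrank_top] at h1
  have h2 : LinearMap.ker g = LinearMap.range f := LinearMap.exact_iff.mp hexact
  rw [h2, LinearMap.finrank_range_of_inj (key i), Module.finrank_prod] at h1
  omega
end
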